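/- arXiv:1309.4868 — 3 statements merged into one kernel-verified Lean document; each statement's English description precedes it below -/
import Mathlib

section
/- Let E be a real inner product space, let k be a real number with k > 0, and let σ, v, s ∈ E satisfy ‖σ‖ ≤ k. Then the following two conditions are equivalent: (i) (Tresca's friction law) if ‖σ‖ = k then there exists a real λ ≥ 0 such that v = s - λ • σ, and if ‖σ‖ < k then v = s; (ii) ⟪v - s, σ⟫ + k * ‖v - s‖ = 0. -/
/-!
With `w = v - s`, Cauchy–Schwarz gives `⟪w, σ⟫ + k‖w‖ ≥ (k - ‖σ‖)‖w‖ ≥ 0`. If `‖σ‖ < k`, equality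
forces `w = 0`; if `‖σ‖ = k`, it is the equality case of Cauchy–Schwarz for `w` and `-σ`, i.e.
`w` lies on the ray spanned by `-σ`.
-/

open scoped RealInnerProductSpace

section

variable {E : Type*} [NormedAddCommGroup E] [InnerProductSpace ℝ E]

theorem real_inner_eq_norm_mul_iff_sameRay {x y : E} : ⟪x, y⟫ = ‖x‖ * ‖y‖ ↔ SameRay ℝ x y := by
  rw [inner_eq_norm_mul_iff_real, sameRay_iff_norm_smul_eq, eq_comm]

theorem real_inner_add_norm_mul_norm_eq_zero_iff {x y : E} (hy : y ≠ 0) :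
    ⟪x, y⟫ + ‖x‖ * ‖y‖ = 0 ↔ ∃ l : ℝ, 0 ≤ l ∧ x = -(l • y) := by
  simp_rw [← smul_neg]
  rw [exists_nonneg_right_iff_sameRay (neg_ne_zero.2 hy), ← real_inner_eq_norm_mul_iff_sameRay,
    inner_neg_right, norm_neg, add_eq_zero_iff_neg_eq]

theorem real_inner_add_mul_norm_eq_zero_iff_of_norm_lt {x y : E} {k : ℝ} (hy : ‖y‖ < k) :
    ⟪x, y⟫ + k * ‖x‖ = 0 ↔ x = 0 := by
  refine ⟨fun h => ?_, fun hx => by simp [hx]⟩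
  by_contra hx
  have cauchy_schwarz : -(‖x‖ * ‖y‖) ≤ ⟪x, y⟫ := neg_le_of_abs_le (abs_real_inner_le_norm x y)
  have : ‖x‖ * ‖y‖ < k * ‖x‖ := by
    rw [mul_comm k]
    exact mul_lt_mul_of_pos_left hy (norm_pos_iff.2 hx)
  linarith

end

/-- Pointwise equivalence of Tresca's friction law with the identity
`⟪v - s, σ⟫ + k‖v - s‖ = 0`, under the constraint `‖σ‖ ≤ k`, `k > 0`. -/
theorem tresca_law_iff {E : Type*} [NormedAddCommGroup E] [InnerProductSpace ℝ E]
    (k : ℝ) (hk : 0 < k) (σ v s : E) (hσ : ‖σ‖ ≤ k) :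
    ((‖σ‖ = k → ∃ l : ℝ, 0 ≤ l ∧ v = s - l • σ) ∧ (‖σ‖ < k → v = s)) ↔
      (inner ℝ (v - s) σ : ℝ) + k * ‖v - s‖ = 0 := by
  rcases hσ.lt_or_eq with hlt | rfl
  · rw [real_inner_add_mul_norm_eq_zero_iff_of_norm_lt hlt, sub_eq_zero]
    simp [hlt, hlt.ne]
  · rw [mul_comm, real_inner_add_norm_mul_norm_eq_zero_iff (norm_pos_iff.1 hk)]
    simp only [sub_eq_iff_eq_add', ← sub_eq_add_neg, lt_irrefl, true_implies, false_implies,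
      and_true]
end

section
/- Let E be a real inner product space, let (Ω, m) be a measure space, let θ : Ω → ℝ, let u, v : Ω → E, and let ν : ℝ → ℝ → ℝ be such that for every t ∈ ℝ the function ν t : ℝ → ℝ is nonnegative and monotone nondecreasing. Then ∫_Ω ⟪ν(θ(ω))(‖u(ω)‖) • u(ω) - ν(θ(ω))(‖v(ω)‖) • v(ω), u(ω) - v(ω)⟫ dm(ω) ≥ 0. -/
open MeasureTheory Set

/-!
By Cauchy–Schwarz, `⟪a • x - b • y, x - y⟫ ≥ (‖x‖ - ‖y‖) (a ‖x‖ - b ‖y‖)` whenever `a + b ≥ 0`.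
With `a = f ‖x‖`, `b = f ‖y‖` the right-hand side is `(‖x‖ - ‖y‖) (g ‖x‖ - g ‖y‖)` for the map
`g s = f s * s`, which is monotone on `[0, ∞)` when `f` is nonnegative and monotone there; so the
integrand is pointwise nonnegative.
-/

section InnerProductSpace

variable {E : Type*} [NormedAddCommGroup E] [InnerProductSpace ℝ E]

lemma norm_sub_norm_mul_le_inner_smul_sub_smul {a b : ℝ} (hab : 0 ≤ a + b) (x y : E) :
    (‖x‖ - ‖y‖) * (a * ‖x‖ - b * ‖y‖) ≤ inner ℝ (a • x - b • y) (x - y) := by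
  have expand : inner ℝ (a • x - b • y) (x - y)
      = a * ‖x‖ ^ 2 + b * ‖y‖ ^ 2 - (a + b) * inner ℝ x y := by
    simp only [inner_sub_left, inner_sub_right, real_inner_smul_left, real_inner_self_eq_norm_sq,
      real_inner_comm x y]
    ring
  have cauchy_schwarz : (a + b) * inner ℝ x y ≤ (a + b) * (‖x‖ * ‖y‖) :=
    mul_le_mul_of_nonneg_left (real_inner_le_norm x y) hab
  rw [expand]
  linarith

lemma inner_smul_norm_sub_smul_norm_nonneg {f : ℝ → ℝ} (hf₀ : ∀ s ∈ Ici 0, 0 ≤ f s)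
    (hf : MonotoneOn f (Ici 0)) (x y : E) :
    0 ≤ inner ℝ (f ‖x‖ • x - f ‖y‖ • y) (x - y) := by
  have hg : MonotoneOn (f * id) (Ici 0) := hf.mul monotoneOn_id hf₀ fun _ hs ↦ hs
  have key : 0 ≤ (‖x‖ - ‖y‖) * (f ‖x‖ * ‖x‖ - f ‖y‖ * ‖y‖) := by
    rw [mul_comm]
    exact (hg.monovaryOn monotoneOn_id).sub_mul_sub_nonneg (norm_nonneg y) (norm_nonneg x)
  have hsum : 0 ≤ f ‖x‖ + f ‖y‖ := add_nonneg (hf₀ _ (norm_nonneg x)) (hf₀ _ (norm_nonneg y))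
  exact key.trans (norm_sub_norm_mul_le_inner_smul_sub_smul hsum x y)

end InnerProductSpace

/-- Integrated monotonicity of the viscosity operator: with `ν t` nonnegative
and nondecreasing for every `t`, the integral
`∫ ⟪ν(θ)(‖u‖) • u - ν(θ)(‖v‖) • v, u - v⟫ dm` is nonnegative. -/
theorem integral_monotone_viscosity {E : Type*} [NormedAddCommGroup E]
    [InnerProductSpace ℝ E] {Ω : Type*} [MeasurableSpace Ω] (m : Measure Ω)
    (θ : Ω → ℝ) (u v : Ω → E) (ν : ℝ → ℝ → ℝ)
    (hν0 : ∀ t s, 0 ≤ ν t s) (hνm : ∀ t, Monotone (ν t)) :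
    0 ≤ ∫ ω, (inner ℝ (ν (θ ω) ‖u ω‖ • u ω - ν (θ ω) ‖v ω‖ • v ω) (u ω - v ω) : ℝ) ∂m :=
  integral_nonneg fun ω ↦
    inner_smul_norm_sub_smul_norm_nonneg (fun s _ ↦ hν0 (θ ω) s) ((hνm (θ ω)).monotoneOn _) _ _
end

section
/- Let E be a finite-dimensional real inner product space, let (Ω, m) be a measure space, let θ : Ω → ℝ be measurable, and let u, v, w : Ω → E be strongly measurable functions such that ω ↦ ‖u(ω)‖ * ‖w(ω)‖ and ω ↦ ‖v(ω)‖ * ‖w(ω)‖ are integrable with respect to m. Let ν : ℝ × E × ℝ → ℝ be continuous and bounded: there is μ₁ ≥ 0 with |ν(t, z, s)| ≤ μ₁ for all (t, z, s). Then the function α : ℝ → ℝ defined by α(t) = ∫_Ω 2 * ν(θ(ω), u(ω) + t • v(ω), ‖u(ω) + t • v(ω)‖) * ⟪u(ω) + t • v(ω), w(ω)⟫ dm(ω) is continuous on ℝ. -/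
open MeasureTheory

theorem continuous_integral_of_dominated_on_balls {α G : Type*} [MeasurableSpace α]
    {μ : Measure α} [NormedAddCommGroup G] [NormedSpace ℝ G]
    {F : ℝ → α → G} (bound : ℝ → α → ℝ)
    (hF_meas : ∀ t, AEStronglyMeasurable (F t) μ)
    (h_bound : ∀ R t, |t| ≤ R → ∀ᵐ a ∂μ, ‖F t a‖ ≤ bound R a)
    (bound_integrable : ∀ R, Integrable (bound R) μ)
    (h_cont : ∀ᵐ a ∂μ, Continuous fun t => F t a) :
    Continuous fun t => ∫ a, F t a ∂μ := by
  refine continuous_iff_continuousAt.2 fun t₀ => ?_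
  refine continuousAt_of_dominated (bound := bound (|t₀| + 1))
    (.of_forall hF_meas) ?_ (bound_integrable _) (h_cont.mono fun _ h => h.continuousAt)
  filter_upwards [Metric.ball_mem_nhds t₀ one_pos] with t ht
  refine h_bound _ t ?_
  have := abs_sub_abs_le_abs_sub t t₀
  rw [Metric.mem_ball, Real.dist_eq] at ht
  linarith

theorem abs_inner_add_smul_le {F : Type*} [NormedAddCommGroup F] [InnerProductSpace ℝ F]
    (x y z : F) {t R : ℝ} (ht : |t| ≤ R) :
    |inner ℝ (x + t • y) z| ≤ ‖x‖ * ‖z‖ + R * (‖y‖ * ‖z‖) :=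
  calc |inner ℝ (x + t • y) z| ≤ ‖x + t • y‖ * ‖z‖ := abs_real_inner_le_norm _ _
    _ ≤ (‖x‖ + |t| * ‖y‖) * ‖z‖ := by
        gcongr
        simpa [norm_smul] using norm_add_le x (t • y)
    _ ≤ (‖x‖ + R * ‖y‖) * ‖z‖ := by gcongr
    _ = ‖x‖ * ‖z‖ + R * (‖y‖ * ‖z‖) := by ring

theorem continuous_hemicontinuity_general {E : Type*} [NormedAddCommGroup E]
    [InnerProductSpace ℝ E]
    {Ω : Type*} [MeasurableSpace Ω] (m : Measure Ω)
    (θ : Ω → ℝ) (hθ : Measurable θ)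
    (u v w : Ω → E) (hu : StronglyMeasurable u) (hv : StronglyMeasurable v)
    (hw : StronglyMeasurable w)
    (hiu : Integrable (fun ω => ‖u ω‖ * ‖w ω‖) m)
    (hiv : Integrable (fun ω => ‖v ω‖ * ‖w ω‖) m)
    (ν : ℝ × E × ℝ → ℝ) (hν : Continuous ν)
    (μ₁ : ℝ) (hb : ∀ (t : ℝ) (z : E) (s : ℝ), |ν (t, z, s)| ≤ μ₁) :
    Continuous (fun t : ℝ =>
      ∫ ω, 2 * ν (θ ω, u ω + t • v ω, ‖u ω + t • v ω‖) *
        (inner ℝ (u ω + t • v ω) (w ω) : ℝ) ∂m) := by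
  refine continuous_integral_of_dominated_on_balls
    (fun R ω => 2 * μ₁ * (‖u ω‖ * ‖w ω‖ + R * (‖v ω‖ * ‖w ω‖))) (fun t => ?_)
    (fun R t ht => .of_forall fun ω => ?_) (fun R => (hiu.add (hiv.const_mul R)).const_mul _)
    (.of_forall fun ω => by fun_prop)
  · have hg : StronglyMeasurable fun ω => u ω + t • v ω := hu.add (hv.const_smul t)
    exact (((hν.comp_stronglyMeasurable (hθ.stronglyMeasurable.prodMk
      (hg.prodMk hg.norm))).const_mul 2).mul (hg.inner hw)).aestronglyMeasurable
  · rw [Real.norm_eq_abs, abs_mul, abs_mul, abs_two, mul_assoc, mul_assoc]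
    gcongr
    · exact (abs_nonneg _).trans (hb 0 0 0)
    · exact hb _ _ _
    · exact abs_inner_add_smul_le _ _ _ ht

/-- Hemicontinuity: `t ↦ ∫ 2 ν(θ, u + t v, ‖u + t v‖) ⟪u + t v, w⟫ dm` is
continuous when `ν` is continuous and bounded and the relevant products of
norms are integrable. -/
theorem continuous_hemicontinuity {E : Type*} [NormedAddCommGroup E]
    [InnerProductSpace ℝ E] [FiniteDimensional ℝ E]
    {Ω : Type*} [MeasurableSpace Ω] (m : Measure Ω)
    (θ : Ω → ℝ) (hθ : Measurable θ)
    (u v w : Ω → E) (hu : StronglyMeasurable u) (hv : StronglyMeasurable v)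
    (hw : StronglyMeasurable w)
    (hiu : Integrable (fun ω => ‖u ω‖ * ‖w ω‖) m)
    (hiv : Integrable (fun ω => ‖v ω‖ * ‖w ω‖) m)
    (ν : ℝ × E × ℝ → ℝ) (hν : Continuous ν)
    (μ₁ : ℝ) (hμ₁ : 0 ≤ μ₁) (hb : ∀ (t : ℝ) (z : E) (s : ℝ), |ν (t, z, s)| ≤ μ₁) :
    Continuous (fun t : ℝ =>
      ∫ ω, 2 * ν (θ ω, u ω + t • v ω, ‖u ω + t • v ω‖) *
        (inner ℝ (u ω + t • v ω) (w ω) : ℝ) ∂m) :=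
  continuous_hemicontinuity_general m θ hθ u v w hu hv hw hiu hiv ν hν μ₁ hb
end
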